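/- Let 𝒜 = (A₁, A₂, δ, ▷) and 𝒢 = (G, E, ∂, ▷') be reduced crossed modules, let f = (f₁, f₂) : 𝒜 → 𝒢 be a morphism of reduced crossed modules, and let (X, H₁) be an f-homotopy, so X ∈ G and H₁ : A₁ → E is an f₁-derivation. Define g₁ : A₁ → G and g₂ : A₂ → E by g₁(a) = X⁻¹·f₁(a)·∂(H₁(a))·X and g₂(e) = X⁻¹ ▷' (f₂(e)·H₁(δ(e))). Then g = (g₁, g₂) is a morphism of reduced crossed modules from 𝒜 to 𝒢; that is: g₁ is a group homomorphism, g₂ is a group homomorphism, ∂ ∘ g₂ = g₁ ∘ δ, and g₂(a ▷ e) = g₁(a) ▷' g₂(e) for all a ∈ A₁ and e ∈ A₂. (This is the target t(H) of the homotopy H.) -/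

import Mathlib

/-! The pair `(a ↦ f₁ a · ∂(H₁ a), e ↦ f₂ e · H₁(δ e))` is already a morphism of crossed
modules: multiplicativity of the first map is the derivation rule combined with (CM1), that of
the second is the derivation rule combined with (CM2), and equivariance follows from the formula
for a derivation on a conjugate `a · δ e · a⁻¹`. The target `t(H)` is this morphism conjugated by
`X⁻¹`, and conjugation by an element of `G` preserves morphisms by (CM1). -/

section Derivation

variable {H G E : Type*} [Group H] [Group G] [Group E] [MulDistribMulAction G E]

def IsDerivation (φ : H →* G) (d : H → E) : Prop :=
  ∀ x y : H, d (x * y) = ((φ y)⁻¹ • d x) * d y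

namespace IsDerivation

variable {φ : H →* G} {d : H → E}

theorem map_one_eq_one (hd : IsDerivation φ d) : d 1 = 1 := by
  have h := hd 1 1
  simp only [mul_one, map_one, inv_one, one_smul] at h
  exact mul_eq_left.mp h.symm

theorem map_inv_eq (hd : IsDerivation φ d) (a : H) : d a⁻¹ = (φ a • d a)⁻¹ := by
  have h := hd a a⁻¹
  rw [mul_inv_cancel, hd.map_one_eq_one, map_inv, inv_inv] at h
  exact eq_inv_of_mul_eq_one_right h.symm

theorem map_conj (hd : IsDerivation φ d) (a b : H) :
    d (a * b * a⁻¹) = φ a • ((φ b)⁻¹ • d a * d b * (d a)⁻¹) := by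
  rw [hd, hd, hd.map_inv_eq, map_inv, inv_inv]
  simp only [smul_mul', smul_inv']

end IsDerivation

end Derivation

section CrossedModule

variable {A₁ A₂ G E : Type*} [Group A₁] [Group A₂] [Group G] [Group E]
  [MulDistribMulAction A₁ A₂] [MulDistribMulAction G E]

structure IsCrossedModuleHom (δA : A₂ →* A₁) (δG : E →* G) (g₁ : A₁ → G) (g₂ : A₂ → E) :
    Prop where
  map_mul₁ : ∀ a b : A₁, g₁ (a * b) = g₁ a * g₁ b
  map_mul₂ : ∀ e e' : A₂, g₂ (e * e') = g₂ e * g₂ e'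
  comp_eq : ∀ e : A₂, δG (g₂ e) = g₁ (δA e)
  map_smul : ∀ (a : A₁) (e : A₂), g₂ (a • e) = g₁ a • g₂ e

theorem inv_smul_eq_conj_of_peiffer {δG : E →* G}
    (CM2G : ∀ e f : E, (δG e) • f = e * f * e⁻¹) (x y : E) :
    (δG x)⁻¹ • y = x⁻¹ * y * x := by
  rw [← map_inv, CM2G, inv_inv]

theorem IsCrossedModuleHom.conj {δA : A₂ →* A₁} {δG : E →* G} {g₁ : A₁ → G} {g₂ : A₂ → E}
    (hg : IsCrossedModuleHom δA δG g₁ g₂)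
    (CM1G : ∀ (X : G) (e : E), δG (X • e) = X * δG e * X⁻¹) (X : G) :
    IsCrossedModuleHom δA δG (fun a => X⁻¹ * g₁ a * X) (fun e => X⁻¹ • g₂ e) where
  map_mul₁ a b := by simp only [hg.map_mul₁]; group
  map_mul₂ e e' := by simp only [hg.map_mul₂, smul_mul']
  comp_eq e := by rw [CM1G, hg.comp_eq, inv_inv]
  map_smul a e := by rw [hg.map_smul, smul_smul, smul_smul]; group

variable {δA : A₂ →* A₁} {δG : E →* G} {f₁ : A₁ →* G} {f₂ : A₂ →* E} {H₁ : A₁ → E}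

theorem IsDerivation.twist_map_smul
    (CM1A : ∀ (a : A₁) (e : A₂), δA (a • e) = a * δA e * a⁻¹)
    (CM2G : ∀ e f : E, (δG e) • f = e * f * e⁻¹)
    (hcomp : ∀ e : A₂, δG (f₂ e) = f₁ (δA e))
    (hact : ∀ (a : A₁) (e : A₂), f₂ (a • e) = f₁ a • f₂ e)
    (hder : IsDerivation f₁ H₁) (a : A₁) (e : A₂) :
    f₂ (a • e) * H₁ (δA (a • e)) = (f₁ a * δG (H₁ a)) • (f₂ e * H₁ (δA e)) := by
  rw [CM1A, hact, hder.map_conj, ← hcomp, inv_smul_eq_conj_of_peiffer CM2G, ← smul_mul',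
    ← smul_smul, CM2G]
  congr 1
  group

theorem IsDerivation.isCrossedModuleHom_twist
    (CM1A : ∀ (a : A₁) (e : A₂), δA (a • e) = a * δA e * a⁻¹)
    (CM1G : ∀ (X : G) (e : E), δG (X • e) = X * δG e * X⁻¹)
    (CM2G : ∀ e f : E, (δG e) • f = e * f * e⁻¹)
    (hcomp : ∀ e : A₂, δG (f₂ e) = f₁ (δA e))
    (hact : ∀ (a : A₁) (e : A₂), f₂ (a • e) = f₁ a • f₂ e)
    (hder : IsDerivation f₁ H₁) :
    IsCrossedModuleHom δA δG (fun a => f₁ a * δG (H₁ a)) (fun e => f₂ e * H₁ (δA e)) where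
  map_mul₁ a b := by
    rw [hder, map_mul, map_mul, CM1G]
    group
  map_mul₂ e e' := by
    rw [map_mul, map_mul, hder, ← hcomp, inv_smul_eq_conj_of_peiffer CM2G]
    group
  comp_eq e := by rw [map_mul, hcomp]
  map_smul := twist_map_smul CM1A CM2G hcomp hact hder

end CrossedModule

theorem crossedModule_homotopy_target_general {A₁ A₂ G E : Type*}
    [Group A₁] [Group A₂] [Group G] [Group E]
    [MulDistribMulAction A₁ A₂] [MulDistribMulAction G E]
    (δA : A₂ →* A₁)
    (CM1A : ∀ (a : A₁) (e : A₂), δA (a • e) = a * δA e * a⁻¹)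
    (δG : E →* G)
    (CM1G : ∀ (X : G) (e : E), δG (X • e) = X * δG e * X⁻¹)
    (CM2G : ∀ e f : E, (δG e) • f = e * f * e⁻¹)
    (f₁ : A₁ →* G) (f₂ : A₂ →* E)
    (hcomp : ∀ e : A₂, δG (f₂ e) = f₁ (δA e))
    (hact : ∀ (a : A₁) (e : A₂), f₂ (a • e) = f₁ a • f₂ e)
    (X : G) (H₁ : A₁ → E)
    (hder : ∀ a b : A₁, H₁ (a * b) = ((f₁ b)⁻¹ • H₁ a) * H₁ b) :
    (∀ a b : A₁,
      X⁻¹ * f₁ (a * b) * δG (H₁ (a * b)) * X =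
        (X⁻¹ * f₁ a * δG (H₁ a) * X) * (X⁻¹ * f₁ b * δG (H₁ b) * X)) ∧
    (∀ e e' : A₂,
      X⁻¹ • (f₂ (e * e') * H₁ (δA (e * e'))) =
        (X⁻¹ • (f₂ e * H₁ (δA e))) * (X⁻¹ • (f₂ e' * H₁ (δA e')))) ∧
    (∀ e : A₂,
      δG (X⁻¹ • (f₂ e * H₁ (δA e))) = X⁻¹ * f₁ (δA e) * δG (H₁ (δA e)) * X) ∧
    (∀ (a : A₁) (e : A₂),
      X⁻¹ • (f₂ (a • e) * H₁ (δA (a • e))) =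
        (X⁻¹ * f₁ a * δG (H₁ a) * X) • (X⁻¹ • (f₂ e * H₁ (δA e)))) := by
  obtain ⟨mul₁, mul₂, comp, smul⟩ :=
    (IsDerivation.isCrossedModuleHom_twist CM1A CM1G CM2G hcomp hact hder).conj CM1G X
  simp only [mul_assoc] at mul₁ comp smul ⊢
  exact ⟨mul₁, mul₂, comp, smul⟩

/-- Let `𝒜 = (A₁, A₂, δA, ▷)` and `𝒢 = (G, E, δG, ▷')` be reduced crossed
modules, `f = (f₁, f₂) : 𝒜 → 𝒢` a morphism of reduced crossed modules, and
`(X, H₁)` an `f`-homotopy (`X ∈ G`, `H₁ : A₁ → E` an `f₁`-derivation).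
Define `g₁(a) = X⁻¹·f₁(a)·δG(H₁(a))·X` and `g₂(e) = X⁻¹ ▷' (f₂(e)·H₁(δA(e)))`.
Then `g = (g₁, g₂)` is a morphism of reduced crossed modules: `g₁` and `g₂`
are group homomorphisms, `δG ∘ g₂ = g₁ ∘ δA`, and `g₂(a ▷ e) = g₁(a) ▷' g₂(e)`.
(This is the target `t(H)` of the homotopy `H`.) -/
theorem crossedModule_homotopy_target {A₁ A₂ G E : Type*}
    [Group A₁] [Group A₂] [Group G] [Group E]
    [MulDistribMulAction A₁ A₂] [MulDistribMulAction G E]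
    (δA : A₂ →* A₁)
    (CM1A : ∀ (a : A₁) (e : A₂), δA (a • e) = a * δA e * a⁻¹)
    (CM2A : ∀ e f : A₂, (δA e) • f = e * f * e⁻¹)
    (δG : E →* G)
    (CM1G : ∀ (X : G) (e : E), δG (X • e) = X * δG e * X⁻¹)
    (CM2G : ∀ e f : E, (δG e) • f = e * f * e⁻¹)
    (f₁ : A₁ →* G) (f₂ : A₂ →* E)
    (hcomp : ∀ e : A₂, δG (f₂ e) = f₁ (δA e))
    (hact : ∀ (a : A₁) (e : A₂), f₂ (a • e) = f₁ a • f₂ e)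
    (X : G) (H₁ : A₁ → E)
    (hder : ∀ a b : A₁, H₁ (a * b) = ((f₁ b)⁻¹ • H₁ a) * H₁ b) :
    (∀ a b : A₁,
      X⁻¹ * f₁ (a * b) * δG (H₁ (a * b)) * X =
        (X⁻¹ * f₁ a * δG (H₁ a) * X) * (X⁻¹ * f₁ b * δG (H₁ b) * X)) ∧
    (∀ e e' : A₂,
      X⁻¹ • (f₂ (e * e') * H₁ (δA (e * e'))) =
        (X⁻¹ • (f₂ e * H₁ (δA e))) * (X⁻¹ • (f₂ e' * H₁ (δA e')))) ∧
    (∀ e : A₂,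
      δG (X⁻¹ • (f₂ e * H₁ (δA e))) = X⁻¹ * f₁ (δA e) * δG (H₁ (δA e)) * X) ∧
    (∀ (a : A₁) (e : A₂),
      X⁻¹ • (f₂ (a • e) * H₁ (δA (a • e))) =
        (X⁻¹ * f₁ a * δG (H₁ a) * X) • (X⁻¹ • (f₂ e * H₁ (δA e)))) :=
  crossedModule_homotopy_target_general δA CM1A δG CM1G CM2G f₁ f₂ hcomp hact X H₁ hder
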